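/- Let G be a graph with vertex set {v_1, …, v_n}, let 0 ≤ k ≤ n, and let H be the split graph constructed from G as in the eternal-Roman-domination reduction (with 2n+2 copies of V in the independent side). If f : V(H) → {0,1,2} is a Roman dominating function of H of weight at most 2k+1, then S = {v_i : f(u_i) = 2} is a dominating set of G with |S| ≤ k. -/
import Mathlib


/-- The split graph `H` of the reduction from a graph `G` on vertices `v_1, …, v_n`, with `m`
copies of the vertex set on the independent side. Vertices: `Sum.inl i = u_i` (clique side
`A`), `Sum.inr (i, j) = w_i^{(j)}` (independent side `B`). Edges: `A` induces a clique, `B`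
induces an independent set, and `u_i — w_k^{(j)}` (for every `j`) iff `i = k` or `v_i ~ v_k`
in `G`. -/
def Hsplit {n : ℕ} (m : ℕ) (G : SimpleGraph (Fin n)) :
    SimpleGraph (Fin n ⊕ (Fin n × Fin m)) :=
  SimpleGraph.fromRel (fun a b =>
    match a, b with
    | Sum.inl _, Sum.inl _ => True
    | Sum.inl i, Sum.inr (k, _) => i = k ∨ G.Adj i k
    | _, _ => False)

/-- let `0 ≤ k ≤ n`. If `f : V(H) → {0,1,2}` is a Roman dominating function of
the split graph `H` (with `2n+2` copies of `V` on the independent side) of weight at most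
`2k+1`, then `S = {v_i : f(u_i) = 2}` is a dominating set of `G` with `|S| ≤ k`. -/
theorem stmt_17 {n k : ℕ} (hk : k ≤ n) (G : SimpleGraph (Fin n))
    (f : Fin n ⊕ (Fin n × Fin (2 * n + 2)) → ℕ)
    (hf2 : ∀ x, f x ≤ 2)
    (hroman : ∀ x, f x = 0 → ∃ y, (Hsplit (2 * n + 2) G).Adj x y ∧ f y = 2)
    (hweight : ∑ x : Fin n ⊕ (Fin n × Fin (2 * n + 2)), f x ≤ 2 * k + 1) :
    let S : Set (Fin n) := {i | f (Sum.inl i) = 2}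
    (∀ v : Fin n, v ∉ S → ∃ u ∈ S, G.Adj v u) ∧
    S.ncard ≤ k := by
  intro S
  have hsplit : ∑ x : Fin n ⊕ (Fin n × Fin (2 * n + 2)), f x
      = ∑ i : Fin n, f (Sum.inl i) + ∑ p : Fin n × Fin (2 * n + 2), f (Sum.inr p) :=
    Fintype.sum_sum_type f
  constructor
  · intro v hv
    by_contra hcon
    push_neg at hcon
    have hge : ∀ j : Fin (2 * n + 2), 1 ≤ f (Sum.inr (v, j)) := by
      intro j
      by_contra h
      have h0 : f (Sum.inr (v, j)) = 0 := by omega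
      obtain ⟨y, hy, hy2⟩ := hroman _ h0
      rw [Hsplit, SimpleGraph.fromRel_adj] at hy
      obtain ⟨hne, hrel⟩ := hy
      match y, hrel, hy2 with
      | Sum.inl i, hrel, hy2 =>
        have hiv : i = v ∨ G.Adj i v := by
          rcases hrel with h' | h'
          · exact h'.elim
          · exact h'
        rcases hiv with rfl | hadj
        · exact hv hy2
        · exact hcon i hy2 hadj.symm
      | Sum.inr p, hrel, hy2 =>
        rcases hrel with h' | h' <;> exact h'.elim
    have h1 : (2 * n + 2 : ℕ) ≤ ∑ p : Fin n × Fin (2 * n + 2), f (Sum.inr p) := by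
      calc (2 * n + 2 : ℕ) = ∑ _j : Fin (2 * n + 2), 1 := by simp
        _ ≤ ∑ j : Fin (2 * n + 2), f (Sum.inr (v, j)) :=
            Finset.sum_le_sum (fun j _ => hge j)
        _ ≤ ∑ p : Fin n × Fin (2 * n + 2), f (Sum.inr p) := by
            rw [Fintype.sum_prod_type]
            exact Finset.single_le_sum (f := fun i => ∑ j : Fin (2 * n + 2), f (Sum.inr (i, j)))
              (fun i _ => Nat.zero_le _) (Finset.mem_univ v)
    omega
  · have hSeq : S = ↑(Finset.univ.filter fun i => f (Sum.inl i) = 2) := by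
      ext i; simp [S]
    rw [hSeq, Set.ncard_coe_finset]
    have h2 : 2 * (Finset.univ.filter fun i => f (Sum.inl i) = 2).card
        ≤ ∑ i : Fin n, f (Sum.inl i) := by
      calc 2 * (Finset.univ.filter fun i => f (Sum.inl i) = 2).card
          = ∑ i ∈ Finset.univ.filter fun i => f (Sum.inl i) = 2, f (Sum.inl i) := by
            rw [Finset.sum_congr rfl (fun i hi => (Finset.mem_filter.mp hi).2)]
            simp [mul_comm]
        _ ≤ ∑ i : Fin n, f (Sum.inl i) :=
            Finset.sum_le_sum_of_subset (Finset.filter_subset _ _)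
    omega
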